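/- Let Σ be a finite alphabet, n ≥ 1, and let (K, Enc, Dec) be a finitary messageless secret-key code over Σ with codeword length n and soundness error ε_s. Fix any γ̂ ∈ Σ^n and let p = P_sk[Enc(sk) = γ̂]. If the tamper-detection failure against the constant tampering function f(γ) = γ̂ is at most ε_t, i.e. P_sk[Dec(sk, γ̂) ≠ tampered ∧ γ̂ ≠ Enc(sk)] ≤ ε_t, then ε_s + ε_t ≥ 1 − p. In particular, if the tampering family contains all constant functions and every fixed string is a codeword with probability at most p, then soundness error and tamper-detection failure cannot both be below (1 − p)/2. -/

import Mathlib

/-! A decoder can answer `invalid` or `tampered` but not both, so every key that does not encode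
`γ̂` is counted either by the soundness error at `γ̂` or by the tamper-detection failure of the
constant attack. A union bound over keys gives `1 ≤ p + εs + εt`. -/

open Finset Classical

/-- Decoding outcomes of a messageless secret-key code. -/
inductive DecOut where
  | valid
  | invalid
  | tampered
deriving DecidableEq

theorem DecOut.ne_invalid_or_ne_tampered (d : DecOut) :
    d ≠ DecOut.invalid ∨ d ≠ DecOut.tampered := by
  cases d <;> simp

theorem Finset.sum_le_sum_ite_add_sum_ite_add_sum_ite {ι M : Type*}
    [AddCommMonoid M] [PartialOrder M] [IsOrderedAddMonoid M]
    (s : Finset ι) (w : ι → M) (hw : ∀ i ∈ s, 0 ≤ w i)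
    (P Q R : ι → Prop) [DecidablePred P] [DecidablePred Q] [DecidablePred R]
    (hcover : ∀ i ∈ s, P i ∨ Q i ∨ R i) :
    ∑ i ∈ s, w i ≤ (∑ i ∈ s, if P i then w i else 0) + (∑ i ∈ s, if Q i then w i else 0)
      + ∑ i ∈ s, if R i then w i else 0 := by
  simp only [← Finset.sum_add_distrib]
  refine Finset.sum_le_sum fun i hi => ?_
  have hnonneg (T : Prop) [Decidable T] : 0 ≤ if T then w i else 0 := ite_nonneg (hw i hi) le_rfl
  rcases hcover i hi with hP | hQ | hR
  · rw [if_pos hP, add_assoc]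
    exact le_add_of_nonneg_right (add_nonneg (hnonneg _) (hnonneg _))
  · rw [if_pos hQ]
    exact (le_add_of_nonneg_left (hnonneg _)).trans (le_add_of_nonneg_right (hnonneg _))
  · rw [if_pos hR]
    exact le_add_of_nonneg_left (add_nonneg (hnonneg _) (hnonneg _))

theorem stmt_13_general
    {S K : Type} [DecidableEq S] [Fintype K]
    {n : ℕ}
    (w : K → ℝ) (hw0 : ∀ k, 0 ≤ w k) (hw1 : ∑ k, w k = 1)
    (Enc : K → Fin n → S) (Dec : K → (Fin n → S) → DecOut)
    (γhat : Fin n → S) (εs εt p : ℝ)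
    (hp : p = ∑ k, if Enc k = γhat then w k else 0)
    (hsound : ∀ γ : Fin n → S,
      (∑ k, if Dec k γ ≠ DecOut.invalid then w k else 0) ≤ εs)
    (htamper :
      (∑ k, if Dec k γhat ≠ DecOut.tampered ∧ γhat ≠ Enc k then w k else 0) ≤ εt) :
    1 - p ≤ εs + εt ∧ ¬(εs < (1 - p) / 2 ∧ εt < (1 - p) / 2) := by
  have hcover : ∀ k ∈ (univ : Finset K), Enc k = γhat ∨ Dec k γhat ≠ DecOut.invalid ∨
      (Dec k γhat ≠ DecOut.tampered ∧ γhat ≠ Enc k) := by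
    intro k _
    by_cases he : Enc k = γhat
    · exact Or.inl he
    · exact Or.inr ((Dec k γhat).ne_invalid_or_ne_tampered.imp id fun ht => ⟨ht, Ne.symm he⟩)
  have hsplit := Finset.sum_le_sum_ite_add_sum_ite_add_sum_ite univ w (fun k _ => hw0 k) _ _ _ hcover
  rw [hw1, ← hp] at hsplit
  have hs := hsound γhat
  exact ⟨by linarith, fun ⟨h1, h2⟩ => by linarith⟩

/-- For a messageless secret-key code with soundness error `εs`,
fix `γ̂` and let `p = P_sk[Enc(sk) = γ̂]`. If the tamper-detection failure against the
constant tampering function `f(γ) = γ̂` is at most `εt`, then `εs + εt ≥ 1 - p`;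
in particular, `εs` and `εt` cannot both be below `(1 - p)/2`. -/
theorem stmt_13
    {S K : Type} [Fintype S] [DecidableEq S] [Fintype K] [Nonempty K]
    {n : ℕ} (hn : 1 ≤ n)
    (w : K → ℝ) (hw0 : ∀ k, 0 ≤ w k) (hw1 : ∑ k, w k = 1)
    (Enc : K → Fin n → S) (Dec : K → (Fin n → S) → DecOut)
    (γhat : Fin n → S) (εs εt p : ℝ)
    (hp : p = ∑ k, if Enc k = γhat then w k else 0)
    (hsound : ∀ γ : Fin n → S,
      (∑ k, if Dec k γ ≠ DecOut.invalid then w k else 0) ≤ εs)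
    (htamper :
      (∑ k, if Dec k γhat ≠ DecOut.tampered ∧ γhat ≠ Enc k then w k else 0) ≤ εt) :
    1 - p ≤ εs + εt ∧ ¬(εs < (1 - p) / 2 ∧ εt < (1 - p) / 2) :=
  stmt_13_general w hw0 hw1 Enc Dec γhat εs εt p hp hsound htamper
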